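/- If a mixed state ρ on H₁^{d₁}⊗H₂^{d₂}⊗H₃^{d₃} is fully separable (ρ = Σ_l p_l ρ_l^{(f)}⊗ρ_l^{(g)}⊗ρ_l^{(h)}), then the matrix S(ρ_{f|g|h}) = [[(T^{(h)})ᵗ, (T^{(gh)})ᵗ],[T^{(fh)}, T^{(fgh)}]] satisfies ‖S(ρ_{f|g|h})‖_tr ≤ (2(d_h−1)/d_h)·√((3d_f−2)(3d_g−2)/(d_f d_g)). -/

import Mathlib

open Matrix BigOperators
open scoped Kronecker ComplexOrder

/-- Trace (nuclear) norm of a real rectangular matrix: tr √(AᵀA). -/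
noncomputable def traceNorm {m n : Type*} [Fintype m] [Fintype n] [DecidableEq n]
    (A : Matrix m n ℝ) : ℝ :=
  ((((Matrix.posSemidef_conjTranspose_mul_self A).1.eigenvectorUnitary : Matrix n n ℝ) *
      diagonal ((RCLike.ofReal : ℝ → ℝ) ∘ (√·) ∘ (Matrix.posSemidef_conjTranspose_mul_self A).1.eigenvalues) *
      (star (Matrix.posSemidef_conjTranspose_mul_self A).1.eigenvectorUnitary : Matrix n n ℝ))).trace

/-!
Polar decomposition gives a contraction `P` with `‖M‖_tr = tr (Pᵀ M)`, so for
`M = ∑ₗ pₗ aₗ bₗᵀ` Cauchy–Schwarz yields `‖M‖_tr ≤ ∑ₗ pₗ ‖aₗ‖ ‖bₗ‖`. For a fully separable state,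
`S(ρ_{f|g|h})` is such a sum with `aₗ = (1, T_l^{(f)})` and
`bₗ = (T_l^{(h)}, T_l^{(g)} ⊗ T_l^{(h)})`.
Bessel's inequality for the Hilbert–Schmidt orthonormal family `{1/√d, λᵢ/√2}` together with
`tr σ² ≤ 1` bounds every local Bloch vector by `‖T‖² ≤ 2(d-1)/d`, whence
`‖aₗ‖² ≤ (3d_f-2)/d_f` and `‖bₗ‖² ≤ (3d_g-2)/d_g · 2(d_h-1)/d_h`; finally `√x ≤ x` for
`x = 2(d_h-1)/d_h ≥ 1`.
-/

namespace Matrix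

section TraceNorm

variable {m n : Type*} [Fintype m] [Fintype n] [DecidableEq n]

omit [DecidableEq n] in
lemma dotProduct_le_sqrt_mul_sqrt (a b : n → ℝ) : a ⬝ᵥ b ≤ √(a ⬝ᵥ a) * √(b ⬝ᵥ b) := by
  simpa [dotProduct, sq] using Real.sum_mul_le_sqrt_mul_sqrt Finset.univ a b

lemma trace_conjStarAlgAut {𝕜 : Type*} [RCLike 𝕜] (U : unitary (Matrix n n 𝕜))
    (A : Matrix n n 𝕜) : (Unitary.conjStarAlgAut 𝕜 _ U A).trace = A.trace := by
  rw [Unitary.conjStarAlgAut_apply, trace_mul_cycle, Unitary.coe_star_mul_self, one_mul]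

lemma dotProduct_conjStarAlgAut_diagonal_mulVec_le (U : unitary (Matrix n n ℝ)) {g : n → ℝ}
    (hg : ∀ i, g i ≤ 1) (b : n → ℝ) :
    b ⬝ᵥ (Unitary.conjStarAlgAut ℝ _ U (diagonal g) *ᵥ b) ≤ b ⬝ᵥ b := by
  have hpsd : (Unitary.conjStarAlgAut ℝ _ U (1 - diagonal g)).PosSemidef := by
    rw [← diagonal_one, diagonal_sub, Unitary.conjStarAlgAut_apply]
    exact (PosSemidef.diagonal fun i => sub_nonneg.mpr (hg i)).mul_mul_conjTranspose_same _
  have := hpsd.dotProduct_mulVec_nonneg b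
  rwa [map_sub, map_one, sub_mulVec, one_mulVec, dotProduct_sub, star_trivial, sub_nonneg] at this

lemma traceNorm_eq_sum_sqrt_eigenvalues (M : Matrix m n ℝ) :
    traceNorm M = ∑ i, √((posSemidef_conjTranspose_mul_self M).1.eigenvalues i) := by
  rw [traceNorm, trace_mul_cycle, Unitary.coe_star_mul_self, one_mul, trace_diagonal]
  rfl

lemma exists_contraction_trace_transpose_mul_eq_traceNorm (M : Matrix m n ℝ) :
    ∃ P : Matrix m n ℝ, (Pᵀ * M).trace = traceNorm M ∧
      ∀ b : n → ℝ, (P *ᵥ b) ⬝ᵥ (P *ᵥ b) ≤ b ⬝ᵥ b := by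
  have hP := posSemidef_conjTranspose_mul_self M
  set C := Unitary.conjStarAlgAut ℝ (Matrix n n ℝ) hP.1.eigenvectorUnitary
  set e := hP.1.eigenvalues
  -- `C (diagonal f)` is the pseudo-inverse of `√(MᵀM)` (recall `0⁻¹ = 0`)
  set f : n → ℝ := fun i => (√(e i))⁻¹
  have hMM : Mᵀ * M = C (diagonal e) := by simpa [C] using hP.1.spectral_theorem
  have hXT : (C (diagonal f))ᵀ = C (diagonal f) := by
    rw [← conjTranspose_eq_transpose_of_trivial, ← star_eq_conjTranspose, ← map_star,
      star_eq_conjTranspose, diagonal_conjTranspose, star_trivial]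
  refine ⟨M * C (diagonal f), ?_, fun b => ?_⟩
  · rw [transpose_mul, hXT, Matrix.mul_assoc, hMM, ← map_mul, diagonal_mul_diagonal,
      trace_conjStarAlgAut, trace_diagonal, traceNorm_eq_sum_sqrt_eigenvalues]
    exact Finset.sum_congr rfl fun i _ => by rw [inv_mul_eq_div, Real.div_sqrt]
  · have hPP : (M * C (diagonal f))ᵀ * (M * C (diagonal f))
        = C (diagonal fun i => f i * (e i * f i)) := by
      rw [transpose_mul, hXT, Matrix.mul_assoc, ← Matrix.mul_assoc Mᵀ, hMM, ← map_mul, ← map_mul,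
        diagonal_mul_diagonal, diagonal_mul_diagonal]
    rw [dotProduct_mulVec, ← mulVec_transpose, mulVec_mulVec, hPP, dotProduct_comm]
    refine dotProduct_conjStarAlgAut_diagonal_mulVec_le _ (fun i => ?_) b
    rw [mul_left_comm, ← sq, inv_pow, Real.sq_sqrt (hP.eigenvalues_nonneg i)]
    exact mul_inv_le_one_of_le₀ le_rfl (hP.eigenvalues_nonneg i)

lemma traceNorm_sum_smul_vecMulVec_le {ι : Type*} [Fintype ι] (c : ι → ℝ) (hc : ∀ l, 0 ≤ c l)
    (a : ι → m → ℝ) (b : ι → n → ℝ) :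
    traceNorm (∑ l, c l • vecMulVec (a l) (b l))
      ≤ ∑ l, c l * (√(a l ⬝ᵥ a l) * √(b l ⬝ᵥ b l)) := by
  obtain ⟨P, hPM, hP⟩ := exists_contraction_trace_transpose_mul_eq_traceNorm
    (∑ l, c l • vecMulVec (a l) (b l))
  rw [← hPM, Matrix.mul_sum, trace_sum]
  refine Finset.sum_le_sum fun l _ => ?_
  rw [Matrix.mul_smul, trace_smul, smul_eq_mul, mul_vecMulVec, trace_vecMulVec, mulVec_transpose,
    ← dotProduct_mulVec]
  refine mul_le_mul_of_nonneg_left ((dotProduct_le_sqrt_mul_sqrt _ _).trans ?_) (hc l)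
  exact mul_le_mul_of_nonneg_left (Real.sqrt_le_sqrt (hP (b l))) (Real.sqrt_nonneg _)

end TraceNorm

section HilbertSchmidt

variable {n : Type*} [Fintype n]

def hilbertSchmidtVec (A : Matrix n n ℂ) : EuclideanSpace ℂ (n × n) :=
  WithLp.toLp 2 fun p => A p.1 p.2

lemma inner_hilbertSchmidtVec (A B : Matrix n n ℂ) :
    inner ℂ (hilbertSchmidtVec A) (hilbertSchmidtVec B) = (Aᴴ * B).trace := by
  simp only [hilbertSchmidtVec, PiLp.inner_apply, RCLike.inner_apply, Fintype.sum_prod_type, trace,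
    diag_apply, mul_apply, conjTranspose_apply, RCLike.star_def, mul_comm]
  exact Finset.sum_comm

lemma norm_hilbertSchmidtVec_sq (A : Matrix n n ℂ) :
    ‖hilbertSchmidtVec A‖ ^ 2 = (Aᴴ * A).trace.re := by
  rw [← inner_hilbertSchmidtVec, ← inner_self_eq_norm_sq (𝕜 := ℂ)]
  rfl

lemma card_ne_zero_of_trace_ne_zero {R : Type*} [AddCommMonoid R] {A : Matrix n n R}
    (h : A.trace ≠ 0) : Fintype.card n ≠ 0 := by
  intro hn
  rw [Fintype.card_eq_zero_iff] at hn
  exact h (by simp [trace])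

lemma IsHermitian.trace_mul_eq_re {A B : Matrix n n ℂ} (hA : A.IsHermitian) (hB : B.IsHermitian) :
    (((A * B).trace.re : ℝ) : ℂ) = (A * B).trace := by
  refine Complex.conj_eq_iff_re.mp ?_
  rw [starRingEnd_apply, ← trace_conjTranspose, conjTranspose_mul, hA.eq, hB.eq, trace_mul_comm]

lemma PosSemidef.re_trace_mul_self_le [DecidableEq n] {σ : Matrix n n ℂ} (hσ : σ.PosSemidef) :
    (σ * σ).trace.re ≤ σ.trace.re ^ 2 := by
  rw [hσ.1.spectral_theorem, ← map_mul, trace_conjStarAlgAut, trace_conjStarAlgAut,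
    diagonal_mul_diagonal, trace_diagonal, trace_diagonal]
  simpa [sq] using Finset.sum_sq_le_sq_sum_of_nonneg (fun i _ => hσ.eigenvalues_nonneg i)

end HilbertSchmidt

end Matrix

noncomputable def blochVector {ι n : Type*} [Fintype n] (lam : ι → Matrix n n ℂ)
    (σ : Matrix n n ℂ) : ι → ℝ :=
  fun i => (σ * lam i).trace.re

section Bloch

variable {ι n : Type*} [Fintype ι] [DecidableEq ι] [Fintype n] [DecidableEq n]
  {lam : ι → Matrix n n ℂ} {σ : Matrix n n ℂ}

theorem blochVector_dotProduct_self_le (hherm : ∀ i, (lam i).IsHermitian)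
    (htr : ∀ i, (lam i).trace = 0) (horth : ∀ i j, (lam i * lam j).trace = if i = j then 2 else 0)
    (hσ : σ.PosSemidef) (hσ1 : σ.trace = 1) :
    blochVector lam σ ⬝ᵥ blochVector lam σ
      ≤ 2 * ((Fintype.card n : ℝ) - 1) / Fintype.card n := by
  have hn := card_ne_zero_of_trace_ne_zero (hσ1 ▸ one_ne_zero)
  set d : ℝ := (Fintype.card n : ℝ)
  have hd : 0 < d := by positivity
  let v : Option ι → EuclideanSpace ℂ (n × n) := fun o =>
    o.elim (hilbertSchmidtVec (((√d)⁻¹ : ℝ) • (1 : Matrix n n ℂ)))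
      fun i => hilbertSchmidtVec (((√2)⁻¹ : ℝ) • lam i)
  have hv : Orthonormal ℂ v := by
    rw [orthonormal_iff_ite]
    rintro (_ | i) (_ | j) <;>
      simp only [v, Option.elim, inner_hilbertSchmidtVec, conjTranspose_smul, conjTranspose_one,
        (hherm _).eq, smul_mul_smul, one_mul, mul_one, trace_smul, trace_one, htr, horth,
        smul_zero, star_trivial]
    · rw [← mul_inv, Real.mul_self_sqrt hd.le, if_pos trivial, Complex.real_smul]
      simp [d, hn]
    · simp
    · simp
    · split_ifs <;> simp_all [← mul_inv, Complex.real_smul]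
  have hnone : ‖inner ℂ (v none) (hilbertSchmidtVec σ)‖ ^ 2 = d⁻¹ := by
    simp [v, inner_hilbertSchmidtVec, hσ1, inv_pow, Real.sq_sqrt hd.le]
  have hsome : ∀ i, ‖inner ℂ (v (some i)) (hilbertSchmidtVec σ)‖ ^ 2
      = 2⁻¹ * blochVector lam σ i ^ 2 := by
    intro i
    rw [← sq_abs (blochVector lam σ i), blochVector, ← Real.norm_eq_abs,
      ← Complex.norm_real, hσ.isHermitian.trace_mul_eq_re (hherm i)]
    simp [v, inner_hilbertSchmidtVec, (hherm i).eq, trace_mul_comm σ, mul_pow, inv_pow]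
  have hbessel := hv.sum_inner_products_le (s := Finset.univ) (hilbertSchmidtVec σ)
  rw [Fintype.sum_option, hnone, norm_hilbertSchmidtVec_sq, hσ.isHermitian.eq] at hbessel
  simp only [hsome, ← Finset.mul_sum] at hbessel
  have hpure : (σ * σ).trace.re ≤ 1 := by simpa [hσ1] using hσ.re_trace_mul_self_le
  have hdot : blochVector lam σ ⬝ᵥ blochVector lam σ = ∑ i, blochVector lam σ i ^ 2 := by
    simp [dotProduct, sq]
  rw [hdot, mul_sub, mul_one, sub_div, mul_div_cancel_right₀ _ hd.ne', div_eq_mul_inv]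
  linarith

theorem one_add_blochVector_dotProduct_self_le (hherm : ∀ i, (lam i).IsHermitian)
    (htr : ∀ i, (lam i).trace = 0) (horth : ∀ i j, (lam i * lam j).trace = if i = j then 2 else 0)
    (hσ : σ.PosSemidef) (hσ1 : σ.trace = 1) :
    1 + blochVector lam σ ⬝ᵥ blochVector lam σ
      ≤ (3 * (Fintype.card n : ℝ) - 2) / Fintype.card n := by
  have hn : (Fintype.card n : ℝ) ≠ 0 :=
    Nat.cast_ne_zero.mpr (card_ne_zero_of_trace_ne_zero (hσ1 ▸ one_ne_zero))
  have h := blochVector_dotProduct_self_le hherm htr horth hσ hσ1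
  rw [show (3 * (Fintype.card n : ℝ) - 2) / Fintype.card n
      = 1 + 2 * ((Fintype.card n : ℝ) - 1) / Fintype.card n by field_simp; ring]
  linarith

end Bloch

lemma dotProduct_self_option_elim {ι : Type*} [Fintype ι] (x : ι → ℝ) :
    (fun o : Option ι => o.elim 1 x) ⬝ᵥ (fun o => o.elim 1 x) = 1 + x ⬝ᵥ x := by
  simp [dotProduct, Fintype.sum_option]

lemma dotProduct_self_sum_elim_mul {J K : Type*} [Fintype J] [Fintype K] (v : J → ℝ)
    (w : K → ℝ) :
    Sum.elim w (fun jk : J × K => v jk.1 * w jk.2) ⬝ᵥ Sum.elim w (fun jk => v jk.1 * w jk.2)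
      = (1 + v ⬝ᵥ v) * (w ⬝ᵥ w) := by
  simp only [dotProduct, Fintype.sum_sum_type, Sum.elim_inl, Sum.elim_inr, Fintype.sum_prod_type,
    add_mul, one_mul, Finset.sum_mul_sum]
  congr 1
  exact Finset.sum_congr rfl fun j _ => Finset.sum_congr rfl fun k _ => by ring

lemma sqrt_dotProduct_option_elim_mul_sqrt_dotProduct_sum_elim_le {I J K : Type*} [Fintype I]
    [Fintype J] [Fintype K] {u : I → ℝ} {v : J → ℝ} {w : K → ℝ} {Cf Cg Ch : ℝ}
    (hu : 1 + u ⬝ᵥ u ≤ Cf) (hv : 1 + v ⬝ᵥ v ≤ Cg) (hw : w ⬝ᵥ w ≤ Ch) (hCh : 1 ≤ Ch) :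
    √((fun o : Option I => o.elim 1 u) ⬝ᵥ (fun o => o.elim 1 u)) *
        √(Sum.elim w (fun jk : J × K => v jk.1 * w jk.2) ⬝ᵥ Sum.elim w (fun jk => v jk.1 * w jk.2))
      ≤ Ch * √(Cf * Cg) := by
  rw [dotProduct_self_option_elim, dotProduct_self_sum_elim_mul]
  have hu0 : 0 ≤ 1 + u ⬝ᵥ u := add_nonneg zero_le_one (dotProduct_star_self_nonneg _)
  have hv0 : 0 ≤ 1 + v ⬝ᵥ v := add_nonneg zero_le_one (dotProduct_star_self_nonneg _)
  have hw0 : 0 ≤ w ⬝ᵥ w := dotProduct_star_self_nonneg _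
  calc √(1 + u ⬝ᵥ u) * √((1 + v ⬝ᵥ v) * (w ⬝ᵥ w)) = √((1 + u ⬝ᵥ u) * (1 + v ⬝ᵥ v) * (w ⬝ᵥ w)) := by
        rw [mul_assoc, Real.sqrt_mul hu0]
    _ ≤ √(Cf * Cg * Ch) := Real.sqrt_le_sqrt <|
        mul_le_mul (mul_le_mul hu hv hv0 (hu0.trans hu)) hw hw0
          (mul_nonneg (hu0.trans hu) (hv0.trans hv))
    _ = √(Cf * Cg) * √Ch := Real.sqrt_mul' _ (zero_le_one.trans hCh)
    _ ≤ √(Cf * Cg) * Ch := by gcongr; exact Real.sqrt_le_self_iff.mpr (Or.inr hCh)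
    _ = Ch * √(Cf * Cg) := mul_comm _ _

lemma re_trace_sum_smul_kronecker_mul {L a b c : Type*} [Fintype L] [Fintype a] [Fintype b]
    [Fintype c] (p : L → ℝ) {σ : L → Matrix a a ℂ} {τ : L → Matrix b b ℂ} {υ : L → Matrix c c ℂ}
    (hσ : ∀ l, (σ l).IsHermitian) (hτ : ∀ l, (τ l).IsHermitian) (hυ : ∀ l, (υ l).IsHermitian)
    {A : Matrix a a ℂ} {B : Matrix b b ℂ} {C : Matrix c c ℂ}
    (hA : A.IsHermitian) (hB : B.IsHermitian) (hC : C.IsHermitian) :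
    ((∑ l, (p l : ℂ) • (σ l ⊗ₖ (τ l ⊗ₖ υ l))) * (A ⊗ₖ (B ⊗ₖ C))).trace.re
      = ∑ l, p l * ((σ l * A).trace.re * ((τ l * B).trace.re * (υ l * C).trace.re)) := by
  rw [Matrix.sum_mul, trace_sum, Complex.re_sum]
  refine Finset.sum_congr rfl fun l _ => ?_
  rw [smul_mul, trace_smul, ← mul_kronecker_mul, ← mul_kronecker_mul, trace_kronecker,
    trace_kronecker, ← (hσ l).trace_mul_eq_re hA, ← (hτ l).trace_mul_eq_re hB,
    ← (hυ l).trace_mul_eq_re hC, smul_eq_mul]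
  norm_cast

theorem fully_separable_trace_norm_bound
    (df dg dh : ℕ) (hdh : 2 ≤ dh)
    (lamf : Fin (df ^ 2 - 1) → Matrix (Fin df) (Fin df) ℂ)
    (lamg : Fin (dg ^ 2 - 1) → Matrix (Fin dg) (Fin dg) ℂ)
    (lamh : Fin (dh ^ 2 - 1) → Matrix (Fin dh) (Fin dh) ℂ)
    (hfherm : ∀ i, (lamf i).IsHermitian) (hftr : ∀ i, (lamf i).trace = 0)
    (hforth : ∀ i j, (lamf i * lamf j).trace = if i = j then 2 else 0)
    (hgherm : ∀ i, (lamg i).IsHermitian) (hgtr : ∀ i, (lamg i).trace = 0)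
    (hgorth : ∀ i j, (lamg i * lamg j).trace = if i = j then 2 else 0)
    (hhherm : ∀ i, (lamh i).IsHermitian) (hhtr : ∀ i, (lamh i).trace = 0)
    (hhorth : ∀ i j, (lamh i * lamh j).trace = if i = j then 2 else 0)
    (ρ : Matrix (Fin df × Fin dg × Fin dh) (Fin df × Fin dg × Fin dh) ℂ)
    (L : ℕ) (p : Fin L → ℝ) (hp : ∀ l, 0 < p l) (hpsum : ∑ l, p l = 1)
    (σf : Fin L → Matrix (Fin df) (Fin df) ℂ)
    (hσf : ∀ l, (σf l).PosSemidef ∧ (σf l).trace = 1)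
    (σg : Fin L → Matrix (Fin dg) (Fin dg) ℂ)
    (hσg : ∀ l, (σg l).PosSemidef ∧ (σg l).trace = 1)
    (σh : Fin L → Matrix (Fin dh) (Fin dh) ℂ)
    (hσh : ∀ l, (σh l).PosSemidef ∧ (σh l).trace = 1)
    (hsep : ρ = ∑ l, (p l : ℂ) • (σf l ⊗ₖ (σg l ⊗ₖ σh l))) :
    traceNorm (Matrix.of fun (i : Option (Fin (df ^ 2 - 1)))
        (j : Fin (dh ^ 2 - 1) ⊕ Fin (dg ^ 2 - 1) × Fin (dh ^ 2 - 1)) =>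
      match i, j with
      | none, Sum.inl k =>
          Complex.re ((ρ * ((1 : Matrix (Fin df) (Fin df) ℂ) ⊗ₖ ((1 : Matrix (Fin dg) (Fin dg) ℂ) ⊗ₖ lamh k))).trace)
      | none, Sum.inr (j, k) =>
          Complex.re ((ρ * ((1 : Matrix (Fin df) (Fin df) ℂ) ⊗ₖ (lamg j ⊗ₖ lamh k))).trace)
      | some i, Sum.inl k =>
          Complex.re ((ρ * (lamf i ⊗ₖ ((1 : Matrix (Fin dg) (Fin dg) ℂ) ⊗ₖ lamh k))).trace)
      | some i, Sum.inr (j, k) =>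
          Complex.re ((ρ * (lamf i ⊗ₖ (lamg j ⊗ₖ lamh k))).trace))
      ≤ (2 * ((dh : ℝ) - 1) / (dh : ℝ)) *
          Real.sqrt ((3 * (df : ℝ) - 2) * (3 * (dg : ℝ) - 2) / ((df : ℝ) * (dg : ℝ))) := by
  set Cf : ℝ := (3 * (df : ℝ) - 2) / df
  set Cg : ℝ := (3 * (dg : ℝ) - 2) / dg
  set Ch : ℝ := 2 * ((dh : ℝ) - 1) / dh
  set a : Fin L → Option (Fin (df ^ 2 - 1)) → ℝ := fun l o => o.elim 1 (blochVector lamf (σf l))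
  set b : Fin L → Fin (dh ^ 2 - 1) ⊕ Fin (dg ^ 2 - 1) × Fin (dh ^ 2 - 1) → ℝ := fun l =>
    Sum.elim (blochVector lamh (σh l))
      fun jk => blochVector lamg (σg l) jk.1 * blochVector lamh (σh l) jk.2
  have hCh : 1 ≤ Ch := by
    rw [le_div_iff₀ (by positivity)]
    linarith [show (2 : ℝ) ≤ dh by exact_mod_cast hdh]
  have hterm : ∀ l, √(a l ⬝ᵥ a l) * √(b l ⬝ᵥ b l) ≤ Ch * √(Cf * Cg) := fun l => by
    have hf := one_add_blochVector_dotProduct_self_le hfherm hftr hforth (hσf l).1 (hσf l).2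
    have hg := one_add_blochVector_dotProduct_self_le hgherm hgtr hgorth (hσg l).1 (hσg l).2
    have hh := blochVector_dotProduct_self_le hhherm hhtr hhorth (hσh l).1 (hσh l).2
    simp only [Fintype.card_fin] at hf hg hh
    exact sqrt_dotProduct_option_elim_mul_sqrt_dotProduct_sum_elim_le hf hg hh hCh
  refine (le_of_eq (congrArg traceNorm ?_)).trans
    ((traceNorm_sum_smul_vecMulVec_le p (fun l => (hp l).le) a b).trans ?_)
  · subst hsep
    ext (_ | i) (k | ⟨j, k⟩)
    all_goals
      simp only [of_apply]
      rw [re_trace_sum_smul_kronecker_mul p (fun l => (hσf l).1.isHermitian)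
        (fun l => (hσg l).1.isHermitian) (fun l => (hσh l).1.isHermitian)
        (by first | exact isHermitian_one | exact hfherm _)
        (by first | exact isHermitian_one | exact hgherm _) (hhherm k)]
      simp [Matrix.sum_apply, vecMulVec_apply, a, b, blochVector, (hσf _).2, (hσg _).2]
  · calc ∑ l, p l * (√(a l ⬝ᵥ a l) * √(b l ⬝ᵥ b l)) ≤ ∑ l, p l * (Ch * √(Cf * Cg)) :=
          Finset.sum_le_sum fun l _ => mul_le_mul_of_nonneg_left (hterm l) (hp l).le
      _ = Ch * √(Cf * Cg) := by rw [← Finset.sum_mul, hpsum, one_mul]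
      _ = _ := by rw [div_mul_div_comm]
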